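/- arXiv:math/0407215 — 4 statements merged into one kernel-verified Lean document; each statement's English description precedes it below -/
import Mathlib

section
/- Let $\mathcal{Z}_0\subset\mathbb{Z}^2\setminus\{0\}$ be a symmetric set containing $(0,1)$, $(0,-1)$, $(1,1)$, and $(-1,-1)$. Define recursively $\mathcal{Z}_n=\{\ell+j\in\mathbb{Z}^2\setminus\{0\} : j\in\mathcal{Z}_0,\ \ell\in\mathcal{Z}_{n-1},\ \ell^\perp\cdot j\ne 0,\ |j|\ne|\ell|\}$, where $\ell^\perp=(-\ell_2,\ell_1)$ and $|\cdot|$ is the Euclidean norm. Then $\bigcup_{n\ge 1}\mathcal{Z}_n=\mathbb{Z}^2\setminus\{0\}$. -/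
/-- Proposition 3.2 (p:crit) of Mattingly–Pardoux: if the symmetric forcing set `Z₀`
contains `(0,1)`, `(0,-1)`, `(1,1)`, `(-1,-1)`, then the admissible-sum recursion
`Zₙ = {ℓ+j ≠ 0 : j ∈ Z₀, ℓ ∈ Zₙ₋₁, ℓ⊥·j ≠ 0, |j| ≠ |ℓ|}` generates the whole
nonzero lattice: `⋃_{n≥1} Zₙ = ℤ² \ {0}`. -/
theorem stmt6 (Z0 : Set (ℤ × ℤ)) (Z : ℕ → Set (ℤ × ℤ))
    (hZ0sub : Z0 ⊆ {v : ℤ × ℤ | v ≠ 0})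
    (hsym : ∀ v ∈ Z0, -v ∈ Z0)
    (h1 : ((0:ℤ), (1:ℤ)) ∈ Z0) (h2 : ((0:ℤ), (-1:ℤ)) ∈ Z0)
    (h3 : ((1:ℤ), (1:ℤ)) ∈ Z0) (h4 : ((-1:ℤ), (-1:ℤ)) ∈ Z0)
    (hbase : Z 0 = Z0)
    (hrec : ∀ n, Z (n + 1) = {v : ℤ × ℤ | v ≠ 0 ∧ ∃ ℓ ∈ Z n, ∃ j ∈ Z0,
      v = ℓ + j ∧ (-ℓ.2 * j.1 + ℓ.1 * j.2 ≠ 0) ∧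
      (j.1 ^ 2 + j.2 ^ 2 ≠ ℓ.1 ^ 2 + ℓ.2 ^ 2)}) :
    (⋃ n : ℕ, Z (n + 1)) = {v : ℤ × ℤ | v ≠ 0} := by
  -- generic step lemma
  have step : ∀ (n : ℕ) (l j : ℤ × ℤ), l ∈ Z n → j ∈ Z0 → l + j ≠ 0 →
      (-l.2 * j.1 + l.1 * j.2 ≠ 0) → (j.1 ^ 2 + j.2 ^ 2 ≠ l.1 ^ 2 + l.2 ^ 2) →
      l + j ∈ Z (n + 1) := by
    intro n l j hl hj hne hperp hnorm
    rw [hrec]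
    exact ⟨hne, l, hl, j, hj, rfl, hperp, hnorm⟩
  -- negation invariance
  have hneg : ∀ n v, v ∈ Z n → -v ∈ Z n := by
    intro n
    induction n with
    | zero => rw [hbase]; exact fun v hv => hsym v hv
    | succ n ih =>
      intro v hv
      rw [hrec] at hv ⊢
      obtain ⟨hne, l, hl, j, hj, hv, hp, hn⟩ := hv
      refine ⟨neg_ne_zero.mpr hne, -l, ih l hl, -j, hsym j hj, by rw [hv, neg_add], ?_, ?_⟩
      · have e : -(-l).2 * (-j).1 + (-l).1 * (-j).2 = -l.2 * j.1 + l.1 * j.2 := by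
          simp only [Prod.fst_neg, Prod.snd_neg]; ring
        rw [e]; exact hp
      · have e : (-j).1 ^ 2 + (-j).2 ^ 2 = j.1 ^ 2 + j.2 ^ 2 := by
          simp only [Prod.fst_neg, Prod.snd_neg]; ring
        have e2 : (-l).1 ^ 2 + (-l).2 ^ 2 = l.1 ^ 2 + l.2 ^ 2 := by
          simp only [Prod.fst_neg, Prod.snd_neg]; ring
        rw [e, e2]; exact hn
  -- concrete moves
  have up : ∀ (n : ℕ) (a b : ℤ), ((a, b) : ℤ × ℤ) ∈ Z n → a ≠ 0 → a ^ 2 + b ^ 2 ≠ 1 →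
      ((a, b + 1) : ℤ × ℤ) ∈ Z (n + 1) := by
    intro n a b h ha hn
    have := step n (a, b) (0, 1) h h1 (by simp [Prod.ext_iff]; intro h'; exact absurd h' ha)
      (by simpa using ha) (by simpa using fun h' => hn h'.symm)
    simpa using this
  have down : ∀ (n : ℕ) (a b : ℤ), ((a, b) : ℤ × ℤ) ∈ Z n → a ≠ 0 → a ^ 2 + b ^ 2 ≠ 1 →
      ((a, b - 1) : ℤ × ℤ) ∈ Z (n + 1) := by
    intro n a b h ha hn
    have := step n (a, b) (0, -1) h h2 (by simp [Prod.ext_iff]; intro h'; exact absurd h' ha)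
      (by simpa using ha) (by simpa using fun h' => hn h'.symm)
    have e : ((a, b) : ℤ × ℤ) + (0, -1) = (a, b - 1) := by
      simp [Prod.ext_iff]; ring
    rwa [e] at this
  have diag : ∀ (n : ℕ) (a b : ℤ), ((a, b) : ℤ × ℤ) ∈ Z n → a ≠ b → a ^ 2 + b ^ 2 ≠ 2 →
      ((a + 1, b + 1) : ℤ × ℤ) ∈ Z (n + 1) := by
    intro n a b h hab hn
    have := step n (a, b) (1, 1) h h3
      (by simp [Prod.ext_iff]; intro h1' h2'; exact hab (by omega))
      (by simpa using fun h' => hab (by omega)) (by simpa using fun h' => hn h'.symm)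
    simpa using this
  have adiag : ∀ (n : ℕ) (a b : ℤ), ((a, b) : ℤ × ℤ) ∈ Z n → a ≠ b → a ^ 2 + b ^ 2 ≠ 2 →
      ((a - 1, b - 1) : ℤ × ℤ) ∈ Z (n + 1) := by
    intro n a b h hab hn
    have := step n (a, b) (-1, -1) h h4
      (by simp [Prod.ext_iff]; intro h1' h2'; exact hab (by omega))
      (by simpa using fun h' => hab (by omega)) (by simpa using fun h' => hn h'.symm)
    have e : ((a, b) : ℤ × ℤ) + (-1, -1) = (a - 1, b - 1) := by
      simp [Prod.ext_iff]; constructor <;> ring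
    rwa [e] at this
  -- vertical freedom in columns with |a| ≥ 2
  have vert : ∀ (a b b' : ℤ) (n : ℕ), (2 ≤ a ∨ a ≤ -2) → ((a, b) : ℤ × ℤ) ∈ Z n →
      ∃ m : ℕ, ((a, b') : ℤ × ℤ) ∈ Z (n + m) := by
    intro a b b' n ha h
    have ha0 : a ≠ 0 := by omega
    have hsq : ∀ c : ℤ, a ^ 2 + c ^ 2 ≠ 1 := by
      intro c h'
      have h4 : 4 ≤ a ^ 2 := by
        rcases ha with h'' | h'' <;> nlinarith
      nlinarith [sq_nonneg c]
    have hup : ∀ k : ℕ, ((a, b + k) : ℤ × ℤ) ∈ Z (n + k) := by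
      intro k
      induction k with
      | zero => simpa using h
      | succ k ih =>
        have := up (n + k) a (b + k) ih ha0 (hsq _)
        have e : ((b : ℤ) + (k + 1 : ℕ)) = (b + k) + 1 := by push_cast; ring
        rw [e]
        exact this
    have hdown : ∀ k : ℕ, ((a, b - k) : ℤ × ℤ) ∈ Z (n + k) := by
      intro k
      induction k with
      | zero => simpa using h
      | succ k ih =>
        have := down (n + k) a (b - k) ih ha0 (hsq _)
        have e : ((b : ℤ) - (k + 1 : ℕ)) = (b - k) - 1 := by push_cast; ring
        rw [e]
        exact this
    rcases le_total b b' with hle | hle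
    · refine ⟨(b' - b).toNat, ?_⟩
      have h' := hup (b' - b).toNat
      have e : b + ((b' - b).toNat : ℤ) = b' := by omega
      rwa [e] at h'
    · refine ⟨(b - b').toNat, ?_⟩
      have h' := hdown (b - b').toNat
      have e : b - ((b - b').toNat : ℤ) = b' := by omega
      rwa [e] at h'
  -- basic points
  have hZ00 : ((1, 1) : ℤ × ℤ) ∈ Z 0 := by rw [hbase]; exact h3
  have c12 : ((1, 2) : ℤ × ℤ) ∈ Z 1 := by
    have := up 0 1 1 hZ00 one_ne_zero (by norm_num)
    simpa using this
  have c10 : ((1, 0) : ℤ × ℤ) ∈ Z 1 := by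
    have := down 0 1 1 hZ00 one_ne_zero (by norm_num)
    simpa using this
  have c11 : ((1, 1) : ℤ × ℤ) ∈ Z 2 := by
    have := down 1 1 2 c12 one_ne_zero (by norm_num)
    simpa using this
  have c21 : ((2, 1) : ℤ × ℤ) ∈ Z 2 := by
    have := diag 1 1 0 c10 (by norm_num) (by norm_num)
    simpa using this
  have c20 : ((2, 0) : ℤ × ℤ) ∈ Z 3 := by
    have := down 2 2 1 c21 two_ne_zero (by norm_num)
    simpa using this
  have c2m1 : ((2, -1) : ℤ × ℤ) ∈ Z 4 := by
    have := down 3 2 0 c20 two_ne_zero (by norm_num)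
    simpa using this
  have c1m2 : ((1, -2) : ℤ × ℤ) ∈ Z 5 := by
    have := adiag 4 2 (-1) c2m1 (by norm_num) (by norm_num)
    simpa using this
  have c1m1 : ((1, -1) : ℤ × ℤ) ∈ Z 6 := by
    have := up 5 1 (-2) c1m2 one_ne_zero (by norm_num)
    simpa using this
  -- column 1
  have col1 : ∀ b : ℤ, ∃ n : ℕ, ((1, b) : ℤ × ℤ) ∈ Z (n + 1) := by
    have hup : ∀ k : ℕ, ((1, 1 + (k : ℤ)) : ℤ × ℤ) ∈ Z (2 + k) := by
      intro k
      induction k with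
      | zero => simpa using c11
      | succ k ih =>
        have := up (2 + k) 1 (1 + k) ih one_ne_zero
          (fun h' => by nlinarith [sq_nonneg ((k : ℤ)), Int.natCast_nonneg k])
        have e : ((1 : ℤ) + ((k + 1 : ℕ) : ℤ)) = (1 + k) + 1 := by push_cast; ring
        rw [e]
        exact this
    have hdown : ∀ k : ℕ, ((1, -2 - (k : ℤ)) : ℤ × ℤ) ∈ Z (5 + k) := by
      intro k
      induction k with
      | zero => simpa using c1m2
      | succ k ih =>
        have hn1 : (1 : ℤ) ^ 2 + (-2 - (k : ℤ)) ^ 2 ≠ 1 :=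
          fun h' => by nlinarith [sq_nonneg ((k : ℤ)), Int.natCast_nonneg k]
        have := down (5 + k) 1 (-2 - k) ih one_ne_zero hn1
        have e : ((-2 : ℤ) - ((k + 1 : ℕ) : ℤ)) = (-2 - k) - 1 := by push_cast; ring
        rw [e]
        exact this
    intro b
    rcases lt_trichotomy b 0 with hb | hb | hb
    · rcases eq_or_lt_of_le (by omega : b ≤ -1) with hb1 | hb1
      · exact ⟨5, by rw [← hb1] at c1m1; exact c1m1⟩
      · refine ⟨4 + (-2 - b).toNat, ?_⟩
        have h' := hdown (-2 - b).toNat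
        have e : -2 - ((-2 - b).toNat : ℤ) = b := by omega
        rw [e] at h'
        have e2 : 5 + (-2 - b).toNat = 4 + (-2 - b).toNat + 1 := by omega
        rwa [e2] at h'
    · exact ⟨0, by rw [hb]; exact c10⟩
    · refine ⟨1 + (b - 1).toNat, ?_⟩
      have h' := hup (b - 1).toNat
      have e : (1 : ℤ) + ((b - 1).toNat : ℤ) = b := by omega
      rw [e] at h'
      have e2 : 2 + (b - 1).toNat = 1 + (b - 1).toNat + 1 := by omega
      rwa [e2] at h'
  -- columns a ≥ 2
  have colge2 : ∀ a : ℤ, 2 ≤ a → ∀ b : ℤ, ∃ n : ℕ, ((a, b) : ℤ × ℤ) ∈ Z (n + 1) := by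
    intro a ha
    refine Int.le_induction
      (motive := fun a _ => ∀ b : ℤ, ∃ n : ℕ, ((a, b) : ℤ × ℤ) ∈ Z (n + 1)) ?_ ?_ a ha
    · intro b
      obtain ⟨m, hm⟩ := vert 2 1 b 2 (Or.inl le_rfl) c21
      exact ⟨1 + m, by rwa [show 1 + m + 1 = 2 + m by omega]⟩
    · intro a ha ih b
      obtain ⟨n, hn⟩ := ih (a + 2)
      have hd := diag (n + 1) a (a + 2) hn (by omega) (by nlinarith)
      obtain ⟨m, hm⟩ := vert (a + 1) (a + 2 + 1) b (n + 1 + 1) (Or.inl (by omega)) hd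
      exact ⟨n + 1 + m, by rwa [show n + 1 + m + 1 = n + 1 + 1 + m by omega]⟩
  -- column 0, b ≥ 1
  have col0 : ∀ b : ℤ, 1 ≤ b → ∃ n : ℕ, ((0, b) : ℤ × ℤ) ∈ Z (n + 1) := by
    intro b hb
    obtain ⟨n, hn⟩ := col1 (b + 1)
    have := adiag (n + 1) 1 (b + 1) hn (by omega) (by nlinarith)
    refine ⟨n + 1, ?_⟩
    have e : ((1 - 1 : ℤ), (b + 1 - 1 : ℤ)) = ((0 : ℤ), b) := by norm_num
    rwa [e] at this
  -- full positive-column coverage (a ≥ 1)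
  have colpos : ∀ a : ℤ, 1 ≤ a → ∀ b : ℤ, ∃ n : ℕ, ((a, b) : ℤ × ℤ) ∈ Z (n + 1) := by
    intro a ha b
    rcases eq_or_lt_of_le ha with h | h
    · rw [← h]; exact col1 b
    · exact colge2 a (by omega) b
  -- conclude
  ext v
  simp only [Set.mem_iUnion, Set.mem_setOf_eq]
  constructor
  · rintro ⟨n, hn⟩
    rw [hrec] at hn
    exact hn.1
  · intro hv
    obtain ⟨a, b⟩ := v
    have hab : a ≠ 0 ∨ b ≠ 0 := by
      by_contra h
      push_neg at h
      exact hv (by simp [Prod.ext_iff, h.1, h.2])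
    rcases lt_trichotomy a 0 with ha | ha | ha
    · obtain ⟨n, hn⟩ := colpos (-a) (by omega) (-b)
      exact ⟨n, by simpa using hneg (n + 1) _ hn⟩
    · subst ha
      have hb : b ≠ 0 := by tauto
      rcases lt_trichotomy b 0 with hb' | hb' | hb'
      · obtain ⟨n, hn⟩ := col0 (-b) (by omega)
        exact ⟨n, by simpa using hneg (n + 1) _ hn⟩
      · exact absurd hb' hb
      · exact col0 b (by omega)
    · exact colpos a (by omega) b
end

section
/- Let $M,K\in\mathbb{N}$ with $M,K>2$ and $|M-K|>2$. Let $\mathcal{Z}_0\subset\mathbb{Z}^2\setminus\{0\}$ be a symmetric set containing $(M+1,0)$, $(M,0)$, $(0,K+1)$, $(0,K)$ and their negatives. Define recursively $\mathcal{Z}_n=\{\ell+j : j\in\mathcal{Z}_0,\ \ell\in\mathcal{Z}_{n-1},\ \ell^\perp\cdot j\ne 0,\ |j|\ne|\ell|\}\cap(\mathbb{Z}^2\setminus\{0\})$. Then $\bigcup_{n\ge1}\mathcal{Z}_n=\mathbb{Z}^2\setminus\{0\}$. -/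
private lemma aux_sq_ne (a b : ℤ) (ha : 0 < a) (hb : 0 < b) (hne : a ≠ b) :
    a ^ 2 ≠ b ^ 2 := by
  intro h
  have h1 : (a - b) * (a + b) = 0 := by linear_combination h
  rcases mul_eq_zero.mp h1 with h2 | h2 <;> omega

private lemma aux_sqgap (a b : ℤ) (ha : 4 ≤ a ^ 2) : a ^ 2 ≠ b ^ 2 + 1 := by
  intro h
  have h1 : (a - b) * (a + b) = 1 := by linear_combination h
  have h2 := Int.isUnit_iff.mp (IsUnit.of_mul_eq_one _ h1)
  rcases h2 with h2 | h2
  · rw [h2, one_mul] at h1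
    have : a = 1 := by omega
    rw [this] at ha; norm_num at ha
  · rw [h2] at h1
    have h3 : a + b = -1 := by omega
    have : a = -1 := by omega
    rw [this] at ha; norm_num at ha

set_option maxHeartbeats 1000000 in
/-- Proposition 3.3 of Mattingly–Pardoux: if `M, K > 2`, `|M - K| > 2`, and the symmetric
forcing set `Z₀` contains `(M+1,0)`, `(M,0)`, `(0,K+1)`, `(0,K)` and their negatives, then
the admissible-sum recursion generates the whole nonzero lattice: `⋃_{n≥1} Zₙ = ℤ² \ {0}`. -/
theorem stmt7 (M K : ℕ) (hM : 2 < M) (hK : 2 < K) (hMK : 2 < |(M : ℤ) - (K : ℤ)|)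
    (Z0 : Set (ℤ × ℤ)) (Z : ℕ → Set (ℤ × ℤ))
    (hZ0sub : Z0 ⊆ {v : ℤ × ℤ | v ≠ 0})
    (hsym : ∀ v ∈ Z0, -v ∈ Z0)
    (h1 : (((M : ℤ) + 1, (0:ℤ)) ∈ Z0)) (h2 : (((M : ℤ), (0:ℤ)) ∈ Z0))
    (h3 : (((0:ℤ), (K : ℤ) + 1) ∈ Z0)) (h4 : (((0:ℤ), (K : ℤ)) ∈ Z0))
    (hbase : Z 0 = Z0)
    (hrec : ∀ n, Z (n + 1) = {v : ℤ × ℤ | v ≠ 0 ∧ ∃ ℓ ∈ Z n, ∃ j ∈ Z0,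
      v = ℓ + j ∧ (-ℓ.2 * j.1 + ℓ.1 * j.2 ≠ 0) ∧
      (j.1 ^ 2 + j.2 ^ 2 ≠ ℓ.1 ^ 2 + ℓ.2 ^ 2)}) :
    (⋃ n : ℕ, Z (n + 1)) = {v : ℤ × ℤ | v ≠ 0} := by
  set m : ℤ := (M : ℤ) with hmdef
  set k : ℤ := (K : ℤ) with hkdef
  have hm3 : 3 ≤ m := by
    have : (2:ℤ) < m := by rw [hmdef]; exact_mod_cast hM
    omega
  have hk3 : 3 ≤ k := by
    have : (2:ℤ) < k := by rw [hkdef]; exact_mod_cast hK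
    omega
  have habs : 2 < m - k ∨ 2 < k - m := by
    rcases abs_cases (m - k) with ⟨h, _⟩ | ⟨h, _⟩
    · left; omega
    · right; omega
  let R : ℤ × ℤ → Prop := fun v => ∃ n, v ∈ Z (n + 1)
  have pairne : ∀ u w : ℤ, (u ≠ 0 ∨ w ≠ 0) → ((u, w) : ℤ × ℤ) ≠ 0 := by
    rintro u w h h0
    rw [Prod.mk_eq_zero] at h0
    rcases h with h | h
    exacts [h h0.1, h h0.2]
  -- one admissible step starting from a point of Z0
  have hstep0 : ∀ a b p q u w : ℤ, ((a, b) : ℤ × ℤ) ∈ Z0 → ((p, q) : ℤ × ℤ) ∈ Z0 →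
      u = a + p → w = b + q → (u ≠ 0 ∨ w ≠ 0) → (-b * p + a * q ≠ 0) →
      (p ^ 2 + q ^ 2 ≠ a ^ 2 + b ^ 2) → R (u, w) := by
    intro a b p q u w ha hpq hu hw hne hperp hnorm
    refine ⟨0, ?_⟩
    rw [hrec]
    subst hu hw
    exact ⟨pairne _ _ hne, (a, b), by rw [hbase]; exact ha, (p, q), hpq, rfl, hperp, hnorm⟩
  -- one admissible step starting from a reachable point
  have hstep : ∀ a b p q u w : ℤ, R (a, b) → ((p, q) : ℤ × ℤ) ∈ Z0 →
      u = a + p → w = b + q → (u ≠ 0 ∨ w ≠ 0) → (-b * p + a * q ≠ 0) →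
      (p ^ 2 + q ^ 2 ≠ a ^ 2 + b ^ 2) → R (u, w) := by
    rintro a b p q u w ⟨n, hn⟩ hpq hu hw hne hperp hnorm
    refine ⟨n + 1, ?_⟩
    rw [hrec]
    subst hu hw
    exact ⟨pairne _ _ hne, (a, b), hn, (p, q), hpq, rfl, hperp, hnorm⟩
  -- negation symmetry of each Z n
  have hnegZ : ∀ n (a b : ℤ), ((a, b) : ℤ × ℤ) ∈ Z n → ((-a, -b) : ℤ × ℤ) ∈ Z n := by
    intro n
    induction n with
    | zero =>
      intro a b h
      rw [hbase] at h ⊢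
      simpa only [Prod.neg_mk] using hsym _ h
    | succ n ih =>
      intro a b h
      rw [hrec] at h ⊢
      obtain ⟨hne, ℓ, hℓ, j, hj, hv, hperp, hnorm⟩ := h
      obtain ⟨l1, l2⟩ := ℓ
      obtain ⟨j1, j2⟩ := j
      rw [Prod.mk_add_mk] at hv
      rw [Prod.ext_iff] at hv
      obtain ⟨e1, e2⟩ := hv
      dsimp only at e1 e2 hperp hnorm
      refine ⟨?_, (-l1, -l2), ih _ _ hℓ, (-j1, -j2),
        by simpa only [Prod.neg_mk] using hsym _ hj, ?_, ?_, ?_⟩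
      · intro h0
        apply hne
        rw [Prod.mk_eq_zero] at h0 ⊢
        omega
      · rw [Prod.mk_add_mk, Prod.mk.injEq]
        omega
      · dsimp only
        intro h0
        exact hperp (by linear_combination h0)
      · dsimp only
        intro h0
        exact hnorm (by linear_combination h0)
  have hnegR : ∀ a b : ℤ, R (a, b) → R (-a, -b) := by
    rintro a b ⟨n, hn⟩
    exact ⟨n, hnegZ (n + 1) a b hn⟩
  -- extra members of Z0
  have hZm : ((-m, 0) : ℤ × ℤ) ∈ Z0 := by simpa only [Prod.neg_mk, neg_zero] using hsym _ h2
  have hZm1 : ((-(m + 1), 0) : ℤ × ℤ) ∈ Z0 := by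
    simpa only [Prod.neg_mk, neg_zero] using hsym _ h1
  have hZ0nk : ((0, -k) : ℤ × ℤ) ∈ Z0 := by simpa only [Prod.neg_mk, neg_zero] using hsym _ h4
  -- vertical step
  have vstep : ∀ a b q w : ℤ, ((0, q) : ℤ × ℤ) ∈ Z0 → a ≠ 0 → q ≠ 0 → w = b + q →
      (q ^ 2 ≠ a ^ 2 + b ^ 2) → R (a, b) → R (a, w) := by
    intro a b q w hq ha hq0 hw hn hRab
    exact hstep a b 0 q a w hRab hq (by ring) hw (Or.inl ha)
      (fun h => (mul_ne_zero ha hq0) (by linear_combination h))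
      (fun h => hn (by linear_combination h))
  -- horizontal step
  have hstepH : ∀ a b p u : ℤ, ((p, 0) : ℤ × ℤ) ∈ Z0 → b ≠ 0 → p ≠ 0 → u = a + p →
      (p ^ 2 ≠ a ^ 2 + b ^ 2) → R (a, b) → R (u, b) := by
    intro a b p u hp hb hp0 hu hn hRab
    exact hstep a b p 0 u b hRab hp hu (by ring) (Or.inr hb)
      (fun h => (mul_ne_zero hb hp0) (by linear_combination -h))
      (fun h => hn (by linear_combination h))
  -- moving up by one when one of the two 2-step routes is unobstructed
  have hup : ∀ a b : ℤ, a ≠ 0 → R (a, b) →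
      ((a ^ 2 + b ^ 2 ≠ (k + 1) ^ 2 ∧ a ^ 2 + (b + k + 1) ^ 2 ≠ k ^ 2) ∨
        (a ^ 2 + b ^ 2 ≠ k ^ 2 ∧ a ^ 2 + (b - k) ^ 2 ≠ (k + 1) ^ 2)) →
      R (a, b + 1) := by
    rintro a b ha hRab (⟨hn1, hn2⟩ | ⟨hn1, hn2⟩)
    · have s1 : R (a, b + (k + 1)) :=
        vstep a b (k + 1) (b + (k + 1)) h3 ha (by omega) rfl (fun h => hn1 h.symm) hRab
      exact vstep a (b + (k + 1)) (-k) (b + 1) hZ0nk ha (by omega) (by ring)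
        (fun h => hn2 (by linear_combination -h)) s1
    · have s1 : R (a, b - k) :=
        vstep a b (-k) (b - k) hZ0nk ha (by omega) (by ring)
          (fun h => hn1 (by linear_combination -h)) hRab
      exact vstep a (b - k) (k + 1) (b + 1) h3 ha (by omega) (by ring)
        (fun h => hn2 (by linear_combination -h)) s1
  -- reach (0, 1)
  have hR01 : R ((0 : ℤ), (1 : ℤ)) := by
    have s1 : R (m, k + 1) :=
      hstep0 m 0 0 (k + 1) m (k + 1) h2 h3 (by ring) (by ring) (Or.inl (by omega))
        (fun h => by nlinarith [hm3, hk3])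
        (fun h => aux_sq_ne (k + 1) m (by omega) (by omega) (by omega) (by linear_combination h))
    have s2 : R (m, 1) :=
      vstep m (k + 1) (-k) 1 hZ0nk (by omega) (by omega) (by ring)
        (fun h => by nlinarith [hm3, hk3]) s1
    exact hstepH m 1 (-m) 0 hZm one_ne_zero (by omega) (by ring)
      (fun h => by nlinarith [sq_nonneg m]) s2
  -- reach (x, 1) for all x
  have hBall : ∀ x : ℤ, R (x, (1 : ℤ)) := by
    intro x
    induction x using Int.induction_on with
    | zero => exact hR01
    | succ i ih =>
      have s1 : R ((i : ℤ) + (m + 1), 1) :=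
        hstepH i 1 (m + 1) ((i : ℤ) + (m + 1)) h1 one_ne_zero (by omega) rfl
          (fun h => aux_sqgap (m + 1) i (by nlinarith [hm3]) (by linear_combination h)) ih
      exact hstepH ((i : ℤ) + (m + 1)) 1 (-m) ((i : ℤ) + 1) hZm one_ne_zero (by omega) (by ring)
        (fun h => aux_sqgap (-m) ((i : ℤ) + (m + 1)) (by nlinarith [hm3]) (by linear_combination h)) s1
    | pred i ih =>
      have s1 : R (-(i : ℤ) - (m + 1), 1) :=
        hstepH (-(i : ℤ)) 1 (-(m + 1)) (-(i : ℤ) - (m + 1)) hZm1 one_ne_zero (by omega) (by ring)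
          (fun h => aux_sqgap (-(m + 1)) (-(i : ℤ)) (by nlinarith [hm3]) (by linear_combination h)) ih
      exact hstepH (-(i : ℤ) - (m + 1)) 1 m (-(i : ℤ) - 1) h2 one_ne_zero (by omega) (by ring)
        (fun h => aux_sqgap m (-(i : ℤ) - (m + 1)) (by nlinarith [hm3]) (by linear_combination h)) s1
  -- moving up by one, always (for x ≠ 0)
  have vplus : ∀ x c : ℤ, x ≠ 0 → R (x, c) → R (x, c + 1) := by
    intro x c hx hRxc
    have hx2 : 0 < x ^ 2 := by rcases lt_or_gt_of_ne hx with h | h <;> nlinarith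
    have detour : c ≠ 0 → c + 1 ≠ 0 → m ^ 2 ≠ x ^ 2 + c ^ 2 →
        (∀ x' : ℤ, x ^ 2 < x' ^ 2 →
          (x' ^ 2 + c ^ 2 ≠ k ^ 2 ∧ x' ^ 2 + (c - k) ^ 2 ≠ (k + 1) ^ 2)) →
        R (x, c + 1) := by
      intro hc0 hc1 hmA hgood
      have hs : ∀ s : ℤ, ((s, 0) : ℤ × ℤ) ∈ Z0 → s ^ 2 = m ^ 2 → 0 < x * s → R (x, c + 1) := by
        intro s hsZ hs2 hxs
        have hs0 : s ≠ 0 := by intro h0; rw [h0] at hs2; nlinarith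
        have hgrow : x ^ 2 + m ^ 2 ≤ (x + s) ^ 2 := by nlinarith
        have hx'0 : x + s ≠ 0 := by
          intro h0
          have e : (x + s) ^ 2 = 0 := by rw [h0]; ring
          nlinarith [hx2, hm3]
        have hlt : x ^ 2 < (x + s) ^ 2 := by nlinarith
        have s1 : R (x + s, c) :=
          hstepH x c s (x + s) hsZ hc0 hs0 rfl (by rw [hs2]; exact hmA) hRxc
        have s2 : R (x + s, c + 1) := hup (x + s) c hx'0 s1 (Or.inr (hgood (x + s) hlt))
        have hsZ' : ((-s, 0) : ℤ × ℤ) ∈ Z0 := by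
          simpa only [Prod.neg_mk, neg_zero] using hsym _ hsZ
        exact hstepH (x + s) (c + 1) (-s) x hsZ' hc1 (neg_ne_zero.mpr hs0) (by ring)
          (fun h => by nlinarith [hgrow, sq_nonneg (c + 1), hx2]) s2
      rcases lt_or_gt_of_ne hx with hneg | hpos
      · exact hs (-m) hZm (by ring) (by nlinarith)
      · exact hs m h2 rfl (by nlinarith)
    by_cases hF1a : x ^ 2 + c ^ 2 = (k + 1) ^ 2
    · by_cases hF2b : x ^ 2 + (c - k) ^ 2 = (k + 1) ^ 2
      · -- bad case 1 : 2c = k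
        have hck : 2 * c = k := by
          have h0 : k * (2 * c - k) = 0 := by linear_combination hF1a - hF2b
          rcases mul_eq_zero.mp h0 with h | h <;> omega
        apply detour (by omega) (by omega) ?_ ?_
        · rw [hF1a]
          exact aux_sq_ne m (k + 1) (by omega) (by omega) (by omega)
        · intro x' hlt
          constructor
          · intro h; nlinarith [hF1a, hk3, hlt]
          · intro h
            have e : c - k = -c := by omega
            rw [e] at h
            nlinarith [hF1a, hlt]
      · by_cases hF2a : x ^ 2 + c ^ 2 = k ^ 2
        · exfalso; nlinarith [hF1a, hF2a, hk3]
        · exact hup x c hx hRxc (Or.inr ⟨hF2a, hF2b⟩)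
    · by_cases hF1b : x ^ 2 + (c + k + 1) ^ 2 = k ^ 2
      · by_cases hF2a : x ^ 2 + c ^ 2 = k ^ 2
        · -- bad case 2 : 2c = -(k+1)
          have hck : 2 * c = -(k + 1) := by
            have h0 : (k + 1) * (2 * c + k + 1) = 0 := by linear_combination hF1b - hF2a
            rcases mul_eq_zero.mp h0 with h | h <;> omega
          apply detour (by omega) (by omega) ?_ ?_
          · rw [hF2a]
            exact aux_sq_ne m k (by omega) (by omega) (by omega)
          · intro x' hlt
            refine ⟨fun h => by nlinarith [hF2a, hlt], ?_⟩
            intro h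
            have hkk : k = -2 * c - 1 := by omega
            have hc2 : c ≤ -2 := by omega
            rw [hkk] at h
            nlinarith [sq_nonneg x', sq_nonneg (c + 2), hc2]
        · by_cases hF2b : x ^ 2 + (c - k) ^ 2 = (k + 1) ^ 2
          · exfalso
            have h0 : (2 * k + 1) * (2 * c + 2) = 0 := by linear_combination hF1b - hF2b
            have hc : c = -1 := by rcases mul_eq_zero.mp h0 with h | h <;> omega
            rw [hc] at hF1b
            have hx0 : x ^ 2 = 0 := by linear_combination hF1b
            exact hx ((pow_eq_zero_iff (by norm_num)).mp hx0)
          · exact hup x c hx hRxc (Or.inr ⟨hF2a, hF2b⟩)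
      · exact hup x c hx hRxc (Or.inl ⟨hF1a, hF1b⟩)
  -- moving down by one
  have vminus : ∀ x c : ℤ, x ≠ 0 → R (x, c) → R (x, c - 1) := by
    intro x c hx h
    have ha := hnegR x c h
    have hb := vplus (-x) (-c) (neg_ne_zero.mpr hx) ha
    have hcneg := hnegR (-x) (-c + 1) hb
    rw [neg_neg] at hcneg
    rw [show -(-c + 1) = c - 1 from by ring] at hcneg
    exact hcneg
  -- reach everything in a nonzero column
  have vall : ∀ x : ℤ, x ≠ 0 → ∀ y : ℤ, R (x, y) := by
    intro x hx
    have key : ∀ d : ℤ, R (x, 1 + d) := by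
      intro d
      induction d using Int.induction_on with
      | zero => simpa using hBall x
      | succ i ih =>
        rw [show (1 : ℤ) + ((i : ℤ) + 1) = (1 + (i : ℤ)) + 1 from by ring]
        exact vplus x (1 + (i : ℤ)) hx ih
      | pred i ih =>
        rw [show (1 : ℤ) + (-(i : ℤ) - 1) = (1 + -(i : ℤ)) - 1 from by ring]
        exact vminus x (1 + -(i : ℤ)) hx ih
    intro y
    have h := key (y - 1)
    rw [show (1 : ℤ) + (y - 1) = y from by ring] at h
    exact h
  -- conclude
  ext v
  simp only [Set.mem_iUnion, Set.mem_setOf_eq]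
  constructor
  · rintro ⟨n, hn⟩
    rw [hrec] at hn
    exact hn.1
  · intro hv
    obtain ⟨x, y⟩ := v
    by_cases hx : x = 0
    · subst hx
      have hy : y ≠ 0 := by
        intro h
        apply hv
        rw [h]
        rfl
      have hmy : R (m, y) := vall m (by omega) y
      exact hstepH m y (-m) 0 hZm hy (by omega) (by ring)
        (fun h => hy ((pow_eq_zero_iff (n := 2) (by norm_num)).mp (by linear_combination -h))) hmy
    · exact vall x hx y
end

section
/- Let $X,Y_1,\dots,Y_N:[0,T]\to\mathbb{R}$ with $\sup_i\|Y_i\|_\infty\le\Delta^{-1/28}$ and Lipschitz constants $\mathcal{H}_1(X),\mathcal{H}_1(Y_i)\le\Delta^{-1/28}$, let $W_1,\dots,W_N:[0,T]\to\mathbb{R}$ with $\sup_i\sup_{[0,T]}|W_i|\le\Delta^{-1/28}$, and define $Z(s)=-\sum_i Y_i(s)W_i(s)$ and $H=X-Z$. Fix a block $I_k=[t_{k-1},t_k]$ of length $\le\Delta$ subdivided at points $s_0<\dots<s_M$ with spacings $\le\delta=\Delta^{5/3}$ and $M\le\Delta^{-2/3}+1$. Define $Q_k(f)=\sum_{\ell=1}^M(f(s_\ell)-f(s_{\ell-1}))^2$.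 Then: (i) $Q_k(X)\le 2\Delta^{109/42}$; (ii) if in addition $\sup_{s\in I_k}|H(s)|<\Delta$, then $Q_k(Z)\le 2Q_k(X)+8\Delta^{4/3}+8\Delta^2$. -/
open Set Finset

/-!
Every increment of `X` over a mesh interval is at most `Δ^(-1/28) Δ^(5/3)`, so each of the at most
`Δ^(-2/3) + 1` squared increments is at most `Δ^(137/42)`. Writing `Z = X - H`, the inequality
`(u - v)² ≤ 2u² + 2v²` bounds `Q(Z)` by `2 Q(X) + 2 Q(H)`, and each increment of `H` is below `2Δ`.
-/

noncomputable def quadVar (f : ℝ → ℝ) (s : ℕ → ℝ) (M : ℕ) : ℝ :=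
  ∑ ℓ ∈ range M, (f (s (ℓ + 1)) - f (s ℓ)) ^ 2

theorem quadVar_le_of_abs_sub_le {f : ℝ → ℝ} {s : ℕ → ℝ} {M : ℕ} {c : ℝ}
    (h : ∀ ℓ < M, |f (s (ℓ + 1)) - f (s ℓ)| ≤ c) : quadVar f s M ≤ M * c ^ 2 := by
  have hsum := sum_le_card_nsmul (range M) (fun ℓ => (f (s (ℓ + 1)) - f (s ℓ)) ^ 2) (c ^ 2)
    fun ℓ hℓ => by
      rw [← sq_abs]
      exact pow_le_pow_left₀ (abs_nonneg _) (h ℓ (mem_range.1 hℓ)) 2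
  simpa [quadVar, nsmul_eq_mul] using hsum

theorem quadVar_le_of_abs_le {g : ℝ → ℝ} {s : ℕ → ℝ} {M : ℕ} {c : ℝ}
    (h : ∀ ℓ ≤ M, |g (s ℓ)| ≤ c) : quadVar g s M ≤ M * (2 * c) ^ 2 :=
  quadVar_le_of_abs_sub_le fun ℓ hℓ =>
    (abs_sub _ _).trans (by linarith [h (ℓ + 1) hℓ, h ℓ hℓ.le])

theorem quadVar_sub_le (f g : ℝ → ℝ) (s : ℕ → ℝ) (M : ℕ) :
    quadVar (fun r => f r - g r) s M ≤ 2 * quadVar f s M + 2 * quadVar g s M := by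
  simp only [quadVar, mul_sum, ← sum_add_distrib]
  gcongr with ℓ
  have hsq := add_sq_le (a := f (s (ℓ + 1)) - f (s ℓ)) (b := -(g (s (ℓ + 1)) - g (s ℓ)))
  rw [neg_sq] at hsq
  linarith

theorem abs_sub_le_of_lipschitz {f : ℝ → ℝ} {S : Set ℝ} {L r r' : ℝ}
    (hf : ∀ r ∈ S, ∀ r' ∈ S, 0 < |r - r'| → |r - r'| ≤ 1 → |f r - f r'| ≤ L * |r - r'|)
    (hr : r ∈ S) (hr' : r' ∈ S) (hrr' : |r - r'| ≤ 1) : |f r - f r'| ≤ L * |r - r'| := by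
  by_cases h : r = r'
  · simp [h]
  · exact hf r hr r' hr' (abs_pos.2 (sub_ne_zero.2 h)) hrr'

theorem quadVar_le_of_lipschitz {f : ℝ → ℝ} {S : Set ℝ} {L δ : ℝ} {s : ℕ → ℝ} {M : ℕ}
    (hf : ∀ r ∈ S, ∀ r' ∈ S, 0 < |r - r'| → |r - r'| ≤ 1 → |f r - f r'| ≤ L * |r - r'|)
    (hL : 0 ≤ L) (hδ : δ ≤ 1) (hs : ∀ ℓ ≤ M, s ℓ ∈ S) (hmono : ∀ ℓ < M, s ℓ ≤ s (ℓ + 1))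
    (hmesh : ∀ ℓ < M, s (ℓ + 1) - s ℓ ≤ δ) : quadVar f s M ≤ M * (L * δ) ^ 2 := by
  refine quadVar_le_of_abs_sub_le fun ℓ hℓ => ?_
  have hgap : |s (ℓ + 1) - s ℓ| ≤ δ := by
    rw [abs_of_nonneg (sub_nonneg.2 (hmono ℓ hℓ))]
    exact hmesh ℓ hℓ
  calc |f (s (ℓ + 1)) - f (s ℓ)| ≤ L * |s (ℓ + 1) - s ℓ| :=
        abs_sub_le_of_lipschitz hf (hs _ hℓ) (hs _ hℓ.le) (hgap.trans hδ)
    _ ≤ L * δ := mul_le_mul_of_nonneg_left hgap hL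

theorem mul_rpow_le_of_le_rpow_add_one {M Δ p : ℝ} (hΔ : 0 < Δ) (hM : M ≤ Δ ^ p + 1) (e : ℝ) :
    M * Δ ^ e ≤ Δ ^ (p + e) + Δ ^ e := by
  rw [Real.rpow_add hΔ]
  linarith [mul_le_mul_of_nonneg_right hM (Real.rpow_nonneg hΔ.le e)]

theorem stmt13_general (T Δ : ℝ) (hΔ : Δ ∈ Ioc (0:ℝ) 1)
    (X : ℝ → ℝ)
    (hXLip : ∀ r ∈ Icc (0:ℝ) T, ∀ r' ∈ Icc (0:ℝ) T,
      0 < |r - r'| → |r - r'| ≤ 1 → |X r - X r'| ≤ Δ ^ (-(1:ℝ)/28) * |r - r'|)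
    (Z H : ℝ → ℝ)
    (hH : ∀ r, H r = X r - Z r)
    (a b : ℝ) (ha : 0 ≤ a) (hb : b ≤ T)
    (Mk : ℕ) (s : ℕ → ℝ)
    (hmono : ∀ ℓ < Mk, s ℓ ≤ s (ℓ + 1))
    (hmesh : ∀ ℓ < Mk, s (ℓ + 1) - s ℓ ≤ Δ ^ ((5:ℝ)/3))
    (hin : ∀ ℓ ≤ Mk, s ℓ ∈ Icc a b)
    (hMk : (Mk : ℝ) ≤ Δ ^ (-(2:ℝ)/3) + 1) :
    (∑ ℓ ∈ range Mk, (X (s (ℓ + 1)) - X (s ℓ)) ^ 2) ≤ 2 * Δ ^ ((109:ℝ)/42) ∧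
    ((∀ r ∈ Icc a b, |H r| < Δ) →
      (∑ ℓ ∈ range Mk, (Z (s (ℓ + 1)) - Z (s ℓ)) ^ 2) ≤
        2 * (∑ ℓ ∈ range Mk, (X (s (ℓ + 1)) - X (s ℓ)) ^ 2)
          + 8 * Δ ^ ((4:ℝ)/3) + 8 * Δ ^ 2) := by
  obtain ⟨hΔ0, hΔ1⟩ := hΔ
  have hQX : quadVar X s Mk ≤ Mk * Δ ^ ((137:ℝ)/42) := by
    have hδ : Δ ^ ((5:ℝ)/3) ≤ 1 := Real.rpow_le_one hΔ0.le hΔ1 (by norm_num)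
    have hexp : (Δ ^ (-(1:ℝ)/28) * Δ ^ ((5:ℝ)/3)) ^ 2 = Δ ^ ((137:ℝ)/42) := by
      rw [← Real.rpow_add hΔ0, ← Real.rpow_mul_natCast hΔ0.le]
      norm_num
    rw [← hexp]
    exact quadVar_le_of_lipschitz hXLip (by positivity) hδ
      (fun ℓ hℓ => ⟨ha.trans (hin ℓ hℓ).1, (hin ℓ hℓ).2.trans hb⟩) hmono hmesh
  refine ⟨?_, fun hHsmall => ?_⟩
  · have hexp_le : Δ ^ ((137:ℝ)/42) ≤ Δ ^ ((109:ℝ)/42) :=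
      Real.rpow_le_rpow_of_exponent_ge hΔ0 hΔ1 (by norm_num)
    have hcount := mul_rpow_le_of_le_rpow_add_one hΔ0 hMk (137/42)
    rw [show -(2:ℝ)/3 + 137/42 = 109/42 by norm_num] at hcount
    change quadVar X s Mk ≤ _
    linarith
  · have hZ : Z = fun r => X r - H r := funext fun r => by rw [hH]; ring
    have hQH : quadVar H s Mk ≤ Mk * (2 * Δ) ^ 2 :=
      quadVar_le_of_abs_le fun ℓ hℓ => (hHsmall _ (hin ℓ hℓ)).le
    have hcount := mul_rpow_le_of_le_rpow_add_one hΔ0 hMk 2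
    rw [show -(2:ℝ)/3 + 2 = 4/3 by norm_num, Real.rpow_two] at hcount
    change quadVar Z s Mk ≤ 2 * quadVar X s Mk + _ + _
    rw [hZ]
    linarith [quadVar_sub_le X H s Mk]

/-- Part of Lemma 6.7 (l:mainDeterministicSmall) of Mattingly–Pardoux: deterministic bounds
on the `δ`-scale quadratic variation over a block `[a,b]` of length at most `Δ`.
Here `Z(s) = -∑ᵢ Yᵢ(s) Wᵢ(s)`, `H = X - Z`, and
`Q(f) = ∑_{ℓ=1}^{M} (f(s_ℓ) - f(s_{ℓ-1}))²`. Then `Q(X) ≤ 2 Δ^(109/42)`, and if moreover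
`sup_{[a,b]} |H| < Δ` then `Q(Z) ≤ 2 Q(X) + 8 Δ^(4/3) + 8 Δ²`. -/
theorem stmt13 (N : ℕ) (T Δ : ℝ) (hT : 0 < T) (hΔ : Δ ∈ Ioc (0:ℝ) 1)
    (X : ℝ → ℝ) (Y W : Fin N → ℝ → ℝ)
    (hY : ∀ i, ∀ r ∈ Icc (0:ℝ) T, |Y i r| ≤ Δ ^ (-(1:ℝ)/28))
    (hW : ∀ i, ∀ r ∈ Icc (0:ℝ) T, |W i r| ≤ Δ ^ (-(1:ℝ)/28))
    (hXLip : ∀ r ∈ Icc (0:ℝ) T, ∀ r' ∈ Icc (0:ℝ) T,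
      0 < |r - r'| → |r - r'| ≤ 1 → |X r - X r'| ≤ Δ ^ (-(1:ℝ)/28) * |r - r'|)
    (hYLip : ∀ i, ∀ r ∈ Icc (0:ℝ) T, ∀ r' ∈ Icc (0:ℝ) T,
      0 < |r - r'| → |r - r'| ≤ 1 → |Y i r - Y i r'| ≤ Δ ^ (-(1:ℝ)/28) * |r - r'|)
    (Z H : ℝ → ℝ)
    (hZ : ∀ r, Z r = -∑ i, Y i r * W i r) (hH : ∀ r, H r = X r - Z r)
    (a b : ℝ) (hab : a ≤ b) (ha : 0 ≤ a) (hb : b ≤ T) (hlen : b - a ≤ Δ)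
    (Mk : ℕ) (s : ℕ → ℝ) (hs0 : s 0 = a) (hsM : s Mk = b)
    (hmono : ∀ ℓ < Mk, s ℓ ≤ s (ℓ + 1))
    (hmesh : ∀ ℓ < Mk, s (ℓ + 1) - s ℓ ≤ Δ ^ ((5:ℝ)/3))
    (hin : ∀ ℓ ≤ Mk, s ℓ ∈ Icc a b)
    (hMk : (Mk : ℝ) ≤ Δ ^ (-(2:ℝ)/3) + 1) :
    (∑ ℓ ∈ range Mk, (X (s (ℓ + 1)) - X (s ℓ)) ^ 2) ≤ 2 * Δ ^ ((109:ℝ)/42) ∧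
    ((∀ r ∈ Icc a b, |H r| < Δ) →
      (∑ ℓ ∈ range Mk, (Z (s (ℓ + 1)) - Z (s ℓ)) ^ 2) ≤
        2 * (∑ ℓ ∈ range Mk, (X (s (ℓ + 1)) - X (s ℓ)) ^ 2)
          + 8 * Δ ^ ((4:ℝ)/3) + 8 * Δ ^ 2) :=
  stmt13_general T Δ hΔ X hXLip Z H hH a b ha hb Mk s hmono hmesh hin hMk
end

section
/- Let $a_1,\dots,a_N$ be real constants and $\hat W_{i,\ell}$, $1\le i\le N$, $1\le\ell\le M$, real numbers (normalized increments). Set $U=\sum_{i=1}^N a_i^2\sum_{\ell=1}^M\hat W_{i,\ell}^2$ and $V=\sum_{i\ne j}a_ia_j\sum_{\ell=1}^M\hat W_{i,\ell}\hat W_{j,\ell}$. Suppose $\sigma>8/7$ and $0<\Delta<6^{-7/(7\sigma-8)}$, and suppose $\Delta^{1/14}<\sup_i|a_i|\le\Delta^{-1/28}$ and $\frac{\Delta}{M}(U+V)<\Delta^\sigma$. Then either $\inf_i\sum_{\ell=1}^M\hat W_{i,\ell}^2\le M/2$, or $\sup_{i\ne j}\big|\sum_{\ell=1}^M\hat W_{i,\ell}\hat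 W_{j,\ell}\big|>\frac{\Delta^{3/14}}{3N^2}M$. -/
open Finset

/-- The deterministic dichotomy underlying Lemma 6.8 (l:mainProbSmall) of Mattingly–Pardoux:
with `U = ∑ᵢ aᵢ² ∑ₗ Ŵᵢₗ²` and `V = ∑_{i≠j} aᵢaⱼ ∑ₗ ŴᵢₗŴⱼₗ`, if `σ > 8/7`,
`0 < Δ < 6^(-7/(7σ-8))`, `Δ^(1/14) < supᵢ|aᵢ| ≤ Δ^(-1/28)` and `(Δ/M)(U+V) < Δ^σ`,
then either some empirical quadratic variation is at most `M/2` or some cross term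
exceeds `Δ^(3/14) M / (3N²)`. -/
theorem stmt14 (N M : ℕ) (hN : 1 ≤ N) (hM : 1 ≤ M)
    (a : Fin N → ℝ) (Wh : Fin N → Fin M → ℝ)
    (σ Δ : ℝ) (hσ : 8/7 < σ) (hΔ0 : 0 < Δ) (hΔ : Δ < (6:ℝ) ^ (-7 / (7 * σ - 8)))
    (U V : ℝ)
    (hU : U = ∑ i, (a i) ^ 2 * ∑ ℓ, (Wh i ℓ) ^ 2)
    (hV : V = ∑ i, ∑ j ∈ univ \ {i}, a i * a j * ∑ ℓ, Wh i ℓ * Wh j ℓ)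
    (ha_lb : ∃ i, Δ ^ ((1:ℝ)/14) < |a i|)
    (ha_ub : ∀ i, |a i| ≤ Δ ^ (-(1:ℝ)/28))
    (hQ : Δ / M * (U + V) < Δ ^ σ) :
    (∃ i, ∑ ℓ, (Wh i ℓ) ^ 2 ≤ (M : ℝ) / 2) ∨
    (∃ i j, i ≠ j ∧ Δ ^ ((3:ℝ)/14) / (3 * (N : ℝ) ^ 2) * M < |∑ ℓ, Wh i ℓ * Wh j ℓ|) := by
  by_contra hcon
  push_neg at hcon
  obtain ⟨h1, h2⟩ := hcon
  obtain ⟨i0, hi0⟩ := ha_lb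
  have hM0 : (0:ℝ) < M := by exact_mod_cast hM
  have hN0 : (0:ℝ) < N := by exact_mod_cast hN
  have h7σ : 0 < 7 * σ - 8 := by linarith
  -- exponent arithmetic
  have e17 : Δ ^ ((1:ℝ)/7) = Δ ^ ((1:ℝ)/14) * Δ ^ ((1:ℝ)/14) := by
    rw [← Real.rpow_add hΔ0]; norm_num
  have e17' : Δ ^ ((1:ℝ)/7) = Δ ^ (-(1:ℝ)/28) * Δ ^ (-(1:ℝ)/28) * Δ ^ ((3:ℝ)/14) := by
    rw [← Real.rpow_add hΔ0, ← Real.rpow_add hΔ0]; norm_num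
  have e87 : Δ ^ ((8:ℝ)/7) = Δ * Δ ^ ((1:ℝ)/7) := by
    nth_rewrite 2 [← Real.rpow_one Δ]
    rw [← Real.rpow_add hΔ0]; norm_num
  -- small factor
  have hsmall : Δ ^ (σ - 8/7) < 1/6 := by
    have h := Real.rpow_lt_rpow hΔ0.le hΔ (by linarith : (0:ℝ) < σ - 8/7)
    calc Δ ^ (σ - 8/7) < ((6:ℝ) ^ (-7 / (7 * σ - 8))) ^ (σ - 8/7) := h
      _ = (6:ℝ) ^ ((-7 / (7 * σ - 8)) * (σ - 8/7)) := by
          rw [← Real.rpow_mul (by norm_num : (0:ℝ) ≤ 6)]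
      _ = (6:ℝ) ^ (-1 : ℝ) := by
          congr 1
          field_simp
      _ = 1/6 := by
          rw [Real.rpow_neg_one]; norm_num
  -- lower bound on U
  have ha2 : Δ ^ ((1:ℝ)/7) < (a i0) ^ 2 := by
    rw [← sq_abs, e17]
    calc Δ ^ ((1:ℝ)/14) * Δ ^ ((1:ℝ)/14) < |a i0| * |a i0| :=
        mul_lt_mul'' hi0 hi0 (Real.rpow_pos_of_pos hΔ0 _).le (Real.rpow_pos_of_pos hΔ0 _).le
      _ = |a i0| ^ 2 := (sq _).symm
  have hUlb : Δ ^ ((1:ℝ)/7) * ((M:ℝ)/2) < U := by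
    have hterm : (a i0) ^ 2 * ∑ ℓ, (Wh i0 ℓ) ^ 2 ≤ U := by
      rw [hU]
      exact Finset.single_le_sum (f := fun i => (a i)^2 * ∑ ℓ, (Wh i ℓ)^2) (fun i _ => by positivity) (Finset.mem_univ i0)
    have h1' := h1 i0
    have : Δ ^ ((1:ℝ)/7) * ((M:ℝ)/2) < (a i0) ^ 2 * ∑ ℓ, (Wh i0 ℓ) ^ 2 := by
      have hA : Δ ^ ((1:ℝ)/7) * ((M:ℝ)/2) < (a i0)^2 * ((M:ℝ)/2) :=
        mul_lt_mul_of_pos_right ha2 (by positivity)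
      have hB : (a i0)^2 * ((M:ℝ)/2) ≤ (a i0)^2 * ∑ ℓ, (Wh i0 ℓ) ^ 2 :=
        mul_le_mul_of_nonneg_left h1'.le ?_
      · linarith
      · positivity
    linarith
  -- upper bound on |V|
  have hVub : |V| ≤ Δ ^ ((1:ℝ)/7) * ((M:ℝ)/3) := by
    set C : ℝ := Δ ^ (-(1:ℝ)/28) * Δ ^ (-(1:ℝ)/28) * (Δ ^ ((3:ℝ)/14) / (3 * (N:ℝ)^2) * M) with hC
    have hC0 : 0 ≤ C := by positivity
    have hterm : ∀ i j : Fin N, i ≠ j → |a i * a j * ∑ ℓ, Wh i ℓ * Wh j ℓ| ≤ C := by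
      intro i j hij
      rw [abs_mul, abs_mul]
      have h2' := h2 i j hij
      have hai := ha_ub i
      have haj := ha_ub j
      have h1 : |a i| * |a j| ≤ Δ ^ (-(1:ℝ)/28) * Δ ^ (-(1:ℝ)/28) :=
        mul_le_mul hai haj (abs_nonneg _) (Real.rpow_pos_of_pos hΔ0 _).le
      have h2'' : |∑ ℓ, Wh i ℓ * Wh j ℓ| ≤ Δ ^ ((3:ℝ)/14) / (3 * (N:ℝ)^2) * M := h2'
      exact mul_le_mul h1 h2'' (abs_nonneg _) (by positivity)
    have hVabs : |V| ≤ ∑ i : Fin N, ∑ j ∈ univ \ {i}, C := by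
      rw [hV]
      calc |∑ i, ∑ j ∈ univ \ {i}, a i * a j * ∑ ℓ, Wh i ℓ * Wh j ℓ|
          ≤ ∑ i : Fin N, |∑ j ∈ univ \ {i}, a i * a j * ∑ ℓ, Wh i ℓ * Wh j ℓ| :=
            Finset.abs_sum_le_sum_abs _ _
        _ ≤ ∑ i : Fin N, ∑ j ∈ univ \ {i}, |a i * a j * ∑ ℓ, Wh i ℓ * Wh j ℓ| := by
            refine Finset.sum_le_sum fun i _ => Finset.abs_sum_le_sum_abs _ _
        _ ≤ ∑ i : Fin N, ∑ j ∈ univ \ {i}, C := by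
            refine Finset.sum_le_sum fun i _ => Finset.sum_le_sum fun j hj => ?_
            have hij : i ≠ j := by
              simp only [Finset.mem_sdiff, Finset.mem_singleton] at hj
              exact fun h => hj.2 h.symm
            exact hterm i j hij
    have hcount : ∑ i : Fin N, ∑ j ∈ univ \ {i}, C ≤ (N:ℝ) * ((N:ℝ) * C) := by
      have hinner : ∀ i : Fin N, ∑ j ∈ univ \ {i}, C ≤ (N:ℝ) * C := by
        intro i
        rw [Finset.sum_const, nsmul_eq_mul]
        have : ((univ \ {i} : Finset (Fin N)).card : ℝ) ≤ (N:ℝ) := by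
          have := Finset.card_le_card (Finset.sdiff_subset (s := (univ : Finset (Fin N))) (t := {i}))
          simpa using (by exact_mod_cast this : ((univ \ {i} : Finset (Fin N)).card : ℝ) ≤ ((univ : Finset (Fin N)).card : ℝ))
        exact mul_le_mul_of_nonneg_right this hC0
      calc ∑ i : Fin N, ∑ j ∈ univ \ {i}, C ≤ ∑ i : Fin N, (N:ℝ) * C :=
            Finset.sum_le_sum fun i _ => hinner i
        _ = (N:ℝ) * ((N:ℝ) * C) := by
            rw [Finset.sum_const, nsmul_eq_mul]; simp [mul_assoc]
    have hfinal : (N:ℝ) * ((N:ℝ) * C) = Δ ^ ((1:ℝ)/7) * ((M:ℝ)/3) := by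
      rw [hC, e17']
      field_simp
    linarith
  -- combine
  have hUV : Δ ^ ((1:ℝ)/7) * ((M:ℝ)/6) < U + V := by
    have := abs_le.mp hVub
    linarith
  have hfin : Δ ^ ((8:ℝ)/7) / 6 < Δ / M * (U + V) := by
    have : Δ / M * (Δ ^ ((1:ℝ)/7) * ((M:ℝ)/6)) < Δ / M * (U + V) :=
      mul_lt_mul_of_pos_left hUV (by positivity)
    calc Δ ^ ((8:ℝ)/7) / 6 = Δ / M * (Δ ^ ((1:ℝ)/7) * ((M:ℝ)/6)) := by
          rw [e87]; field_simp
      _ < Δ / M * (U + V) := this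
  have hσdecomp : Δ ^ σ < Δ ^ ((8:ℝ)/7) / 6 := by
    have : Δ ^ σ = Δ ^ ((8:ℝ)/7) * Δ ^ (σ - 8/7) := by
      rw [← Real.rpow_add hΔ0]; ring_nf
    rw [this]
    have h87pos : 0 < Δ ^ ((8:ℝ)/7) := Real.rpow_pos_of_pos hΔ0 _
    calc Δ ^ ((8:ℝ)/7) * Δ ^ (σ - 8/7) < Δ ^ ((8:ℝ)/7) * (1/6) :=
        mul_lt_mul_of_pos_left hsmall h87pos
      _ = Δ ^ ((8:ℝ)/7) / 6 := by ring
  linarith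
end
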